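/- arXiv:2008.11994 — 2 statements merged into one kernel-verified Lean document; each statement's English description precedes it below -/
import Mathlib

section
/- Let Θ ⊆ ℝ^n be nonempty compact convex, φ ∈ ℝ^n, γ ≥ 1, λ ≥ 0, and suppose the true value z satisfies |z - φᵀθ| ≤ γ·max_{θ'∈Θ}|φᵀ(θ' - θ)| + λ for all θ ∈ Θ. Then ζ^min ≤ z ≤ ζ^max, where ζ^max and ζ^min are defined as min_{θ_0∈Θ}(φᵀθ_0 + γ max_{θ∈Θ}|φᵀ(θ-θ_0)| + λ) and max_{θ_0∈Θ}(φᵀθ_0 - γ max_{θ∈Θ}|φᵀ(θ-θ_0)| - λ) respectively. -/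
open Matrix

theorem stmt_7 (n : ℕ) (Θ : Set (Fin n → ℝ)) (hne : Θ.Nonempty)
    (hcpt : IsCompact Θ) (hcvx : Convex ℝ Θ) (φ : Fin n → ℝ)
    (γ lam : ℝ) (hγ : 1 ≤ γ) (hlam : 0 ≤ lam) (z : ℝ)
    (hz : ∀ θ ∈ Θ, |z - φ ⬝ᵥ θ| ≤ γ * sSup ((fun θ' => |φ ⬝ᵥ (θ' - θ)|) '' Θ) + lam)
    (ζmax ζmin : ℝ)
    (hmax : ζmax = sInf {x : ℝ | ∃ θ0 ∈ Θ,
        x = φ ⬝ᵥ θ0 + γ * sSup ((fun θ => |φ ⬝ᵥ (θ - θ0)|) '' Θ) + lam})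
    (hmin : ζmin = sSup {x : ℝ | ∃ θ0 ∈ Θ,
        x = φ ⬝ᵥ θ0 - γ * sSup ((fun θ => |φ ⬝ᵥ (θ - θ0)|) '' Θ) - lam}) :
    ζmin ≤ z ∧ z ≤ ζmax := by
  obtain ⟨θ1, hθ1⟩ := hne
  constructor
  · rw [hmin]
    refine csSup_le ⟨_, θ1, hθ1, rfl⟩ ?_
    rintro x ⟨θ0, hθ0, rfl⟩
    have h := hz θ0 hθ0
    have := abs_le.mp h
    linarith [this.2]
  · rw [hmax]
    refine le_csInf ⟨_, θ1, hθ1, rfl⟩ ?_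
    rintro x ⟨θ0, hθ0, rfl⟩
    have h := hz θ0 hθ0
    have := abs_le.mp h
    linarith [this.1]
end

section
/- For a nonempty compact convex Θ ⊆ ℝ^n, φ ∈ ℝ^n, γ ≥ 1, λ ≥ 0: ζ^max − ζ^min ≥ 2λ + (γ−1)·W where W = max_{θ∈Θ}φᵀθ − min_{θ∈Θ}φᵀθ, with ζ^max, ζ^min as in the local filtering scheme (ζ^max = min_{θ_0∈Θ}(φᵀθ_0 + γ max_{θ∈Θ}|φᵀ(θ−θ_0)|) + λ, ζ^min = max_{θ_0∈Θ}(φᵀθ_0 − γ max_{θ∈Θ}|φᵀ(θ−θ_0)|) − λ). -/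
open Matrix

theorem stmt_15 (n : ℕ) (Θ : Set (Fin n → ℝ)) (hne : Θ.Nonempty)
    (hcpt : IsCompact Θ) (hcvx : Convex ℝ Θ) (φ : Fin n → ℝ)
    (γ lam : ℝ) (hγ : 1 ≤ γ) (hlam : 0 ≤ lam)
    (ζmax ζmin W : ℝ)
    (hmax : ζmax = sInf {x : ℝ | ∃ θ0 ∈ Θ,
        x = φ ⬝ᵥ θ0 + γ * sSup ((fun θ => |φ ⬝ᵥ (θ - θ0)|) '' Θ)} + lam)
    (hmin : ζmin = sSup {x : ℝ | ∃ θ0 ∈ Θ,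
        x = φ ⬝ᵥ θ0 - γ * sSup ((fun θ => |φ ⬝ᵥ (θ - θ0)|) '' Θ)} - lam)
    (hW : W = sSup ((fun θ => φ ⬝ᵥ θ) '' Θ) - sInf ((fun θ => φ ⬝ᵥ θ) '' Θ)) :
    2 * lam + (γ - 1) * W ≤ ζmax - ζmin := by
  classical
  set g : (Fin n → ℝ) → ℝ := fun θ => φ ⬝ᵥ θ with hg
  have hgc : Continuous g := by
    simp only [hg, dotProduct]
    exact continuous_finset_sum _ fun i _ => continuous_const.mul (continuous_apply i)
  have hK : IsCompact (g '' Θ) := hcpt.image hgc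
  have hKne : (g '' Θ).Nonempty := hne.image g
  set M := sSup (g '' Θ) with hM
  set m := sInf (g '' Θ) with hm
  obtain ⟨θM, hθM, hgθM⟩ := hK.sSup_mem hKne
  obtain ⟨θm, hθm, hgθm⟩ := hK.sInf_mem hKne
  have hub : ∀ θ ∈ Θ, g θ ≤ M := fun θ hθ => le_csSup hK.bddAbove ⟨θ, hθ, rfl⟩
  have hlb : ∀ θ ∈ Θ, m ≤ g θ := fun θ hθ => csInf_le hK.bddBelow ⟨θ, hθ, rfl⟩
  -- properties of S θ0
  have hSkey : ∀ θ0 ∈ Θ, M - g θ0 ≤ sSup ((fun θ => |φ ⬝ᵥ (θ - θ0)|) '' Θ) ∧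
      g θ0 - m ≤ sSup ((fun θ => |φ ⬝ᵥ (θ - θ0)|) '' Θ) := by
    intro θ0 hθ0
    have hc : Continuous (fun θ => |φ ⬝ᵥ (θ - θ0)|) := by
      have : (fun θ => |φ ⬝ᵥ (θ - θ0)|) = fun θ => |g θ - g θ0| := by
        funext θ; simp [hg, dotProduct_sub]
      rw [this]
      exact (hgc.sub continuous_const).abs
    have hbdd : BddAbove ((fun θ => |φ ⬝ᵥ (θ - θ0)|) '' Θ) := (hcpt.image hc).bddAbove
    have h1 : |φ ⬝ᵥ (θM - θ0)| ≤ sSup ((fun θ => |φ ⬝ᵥ (θ - θ0)|) '' Θ) :=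
      le_csSup hbdd ⟨θM, hθM, rfl⟩
    have h2 : |φ ⬝ᵥ (θm - θ0)| ≤ sSup ((fun θ => |φ ⬝ᵥ (θ - θ0)|) '' Θ) :=
      le_csSup hbdd ⟨θm, hθm, rfl⟩
    have e1 : φ ⬝ᵥ (θM - θ0) = M - g θ0 := by
      rw [dotProduct_sub]; exact congrArg (fun x => x - φ ⬝ᵥ θ0) hgθM
    have e2 : φ ⬝ᵥ (θm - θ0) = m - g θ0 := by
      rw [dotProduct_sub]; exact congrArg (fun x => x - φ ⬝ᵥ θ0) hgθm
    constructor
    · calc M - g θ0 ≤ |M - g θ0| := le_abs_self _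
        _ = |φ ⬝ᵥ (θM - θ0)| := by rw [e1]
        _ ≤ _ := h1
    · calc g θ0 - m ≤ |m - g θ0| := by rw [abs_sub_comm]; exact le_abs_self _
        _ = |φ ⬝ᵥ (θm - θ0)| := by rw [e2]
        _ ≤ _ := h2
  have hγ0 : (0:ℝ) ≤ γ := le_trans zero_le_one hγ
  -- lower bound for ζmax's inf
  have hmaxge : m + γ * ((M - m) / 2) ≤ sInf {x : ℝ | ∃ θ0 ∈ Θ,
      x = φ ⬝ᵥ θ0 + γ * sSup ((fun θ => |φ ⬝ᵥ (θ - θ0)|) '' Θ)} := by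
    obtain ⟨θ0, hθ0⟩ := hne
    refine le_csInf ⟨_, θ0, hθ0, rfl⟩ ?_
    rintro x ⟨θ1, hθ1, rfl⟩
    obtain ⟨ha, hb⟩ := hSkey θ1 hθ1
    have hS : (M - m) / 2 ≤ sSup ((fun θ => |φ ⬝ᵥ (θ - θ1)|) '' Θ) := by linarith
    have := hlb θ1 hθ1
    nlinarith [mul_le_mul_of_nonneg_left hS hγ0]
  -- upper bound for ζmin's sup
  have hminle : sSup {x : ℝ | ∃ θ0 ∈ Θ,
      x = φ ⬝ᵥ θ0 - γ * sSup ((fun θ => |φ ⬝ᵥ (θ - θ0)|) '' Θ)} ≤ M - γ * ((M - m) / 2) := by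
    obtain ⟨θ0, hθ0⟩ := hne
    refine csSup_le ⟨_, θ0, hθ0, rfl⟩ ?_
    rintro x ⟨θ1, hθ1, rfl⟩
    obtain ⟨ha, hb⟩ := hSkey θ1 hθ1
    have hS : (M - m) / 2 ≤ sSup ((fun θ => |φ ⬝ᵥ (θ - θ1)|) '' Θ) := by linarith
    have := hub θ1 hθ1
    nlinarith [mul_le_mul_of_nonneg_left hS hγ0]
  have hWMm : W = M - m := hW
  rw [hmax, hmin, hWMm]
  linarith
end
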